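/- arXiv:2410.00542 — 5 statements merged into one kernel-verified Lean document; each statement's English description precedes it below -/
import Mathlib

section
/- Adaptive basic sequential composition: let M₁ : 𝒟 → PMF Ω₁ satisfy (ε₁,δ₁)-differential privacy and let M₂ : 𝒟 → Ω₁ → PMF Ω₂ be such that for every fixed ω ∈ Ω₁ the mechanism D ↦ M₂ D ω satisfies (ε₂,δ₂)-differential privacy. Then the composed mechanism D ↦ (M₁ D).bind (fun ω => (M₂ D ω).map (fun ω' => (ω, ω'))), which releases the pair of outputs, satisfies (ε₁+ε₂, δ₁+δ₂)-differential privacy. -/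
/-- A mechanism `M : 𝒟 → PMF Ω` satisfies `(ε,δ)`-differential privacy with respect to the
adjacency relation `adj` if for all adjacent datasets `D ≃ D'` and all sets `S` of outcomes,
`Pr[M D ∈ S] ≤ exp ε * Pr[M D' ∈ S] + δ`. -/
def IsDP {𝒟 Ω : Type*} (adj : 𝒟 → 𝒟 → Prop) (M : 𝒟 → PMF Ω) (ε δ : ℝ) : Prop :=
  ∀ D D', adj D D' → ∀ S : Set Ω,
    (M D).toOuterMeasure S ≤
      ENNReal.ofReal (Real.exp ε) * (M D').toOuterMeasure S + ENNReal.ofReal δ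

lemma pmf_toOuterMeasure_le_one {Ω : Type*} (p : PMF Ω) (s : Set Ω) :
    p.toOuterMeasure s ≤ 1 := by
  rw [PMF.toOuterMeasure_apply]
  refine le_trans (ENNReal.tsum_le_tsum fun x => Set.indicator_le_self _ _ _) ?_
  exact le_of_eq p.tsum_coe

/-- Adaptive basic sequential composition: if `M₁` is `(ε₁,δ₁)`-DP and, for every fixed
`ω : Ω₁`, the mechanism `D ↦ M₂ D ω` is `(ε₂,δ₂)`-DP, then the composed mechanism releasing
the pair of outputs, `D ↦ (M₁ D).bind (fun ω => (M₂ D ω).map (fun ω' => (ω, ω')))`, is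
`(ε₁ + ε₂, δ₁ + δ₂)`-DP. -/
theorem dp_adaptive_composition {𝒟 Ω₁ Ω₂ : Type*} (adj : 𝒟 → 𝒟 → Prop)
    (hadj : Symmetric adj) (ε₁ δ₁ ε₂ δ₂ : ℝ)
    (hε₁ : 0 ≤ ε₁) (hδ₁ : 0 ≤ δ₁) (hε₂ : 0 ≤ ε₂) (hδ₂ : 0 ≤ δ₂)
    (M₁ : 𝒟 → PMF Ω₁) (hM₁ : IsDP adj M₁ ε₁ δ₁)
    (M₂ : 𝒟 → Ω₁ → PMF Ω₂) (hM₂ : ∀ ω : Ω₁, IsDP adj (fun D => M₂ D ω) ε₂ δ₂) :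
    IsDP adj (fun D => (M₁ D).bind (fun ω => (M₂ D ω).map (fun ω' => (ω, ω'))))
      (ε₁ + ε₂) (δ₁ + δ₂) := by
  intro D D' hDD' S
  set E₁ : ENNReal := ENNReal.ofReal (Real.exp ε₁) with hE₁
  set E₂ : ENNReal := ENNReal.ofReal (Real.exp ε₂) with hE₂
  set d₁ : ENNReal := ENNReal.ofReal δ₁ with hd₁
  set d₂ : ENNReal := ENNReal.ofReal δ₂ with hd₂
  have hE₁ne : E₁ ≠ ⊤ := ENNReal.ofReal_ne_top
  set p : Ω₁ → ENNReal := fun ω => M₁ D ω with hp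
  set p' : Ω₁ → ENNReal := fun ω => M₁ D' ω with hp'
  set T : Ω₁ → Set Ω₂ := fun ω => (fun ω' => (ω, ω')) ⁻¹' S with hT
  set g : Ω₁ → ENNReal := fun ω => (M₂ D ω).toOuterMeasure (T ω) with hg
  set q : Ω₁ → ENNReal := fun ω => (M₂ D' ω).toOuterMeasure (T ω) with hq
  set h : Ω₁ → ENNReal := fun ω => min 1 (E₂ * q ω) with hh
  have hh_le_one : ∀ ω, h ω ≤ 1 := fun ω => min_le_left _ _
  -- rewrite both sides as sums
  have hLHS : ((M₁ D).bind fun ω => (M₂ D ω).map fun ω' => (ω, ω')).toOuterMeasure S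
      = ∑' ω, p ω * g ω := by
    rw [PMF.toOuterMeasure_bind_apply]
    exact tsum_congr fun ω => by rw [PMF.toOuterMeasure_map_apply]
  have hRHS : ((M₁ D').bind fun ω => (M₂ D' ω).map fun ω' => (ω, ω')).toOuterMeasure S
      = ∑' ω, p' ω * q ω := by
    rw [PMF.toOuterMeasure_bind_apply]
    exact tsum_congr fun ω => by rw [PMF.toOuterMeasure_map_apply]
  -- pointwise bound on g
  have hg_le : ∀ ω, g ω ≤ h ω + d₂ := by
    intro ω
    have h1 : g ω ≤ 1 := pmf_toOuterMeasure_le_one _ _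
    have h2 : g ω ≤ E₂ * q ω + d₂ := hM₂ ω D D' hDD' (T ω)
    rcases le_total (E₂ * q ω) 1 with hc | hc
    · calc g ω ≤ E₂ * q ω + d₂ := h2
        _ = h ω + d₂ := by rw [hh]; simp [min_eq_right hc]
    · calc g ω ≤ 1 := h1
        _ ≤ h ω + d₂ := by rw [hh]; simp [min_eq_left hc]
  -- the bad set
  set A : Set Ω₁ := {ω | E₁ * p' ω < p ω} with hA
  -- key cancellation: mass excess on A is at most d₁
  have hBfin : ∑' ω, A.indicator (fun ω => E₁ * p' ω) ω ≠ ⊤ := by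
    refine ne_top_of_le_ne_top (b := E₁) ?_ ?_
    · exact hE₁ne
    · calc ∑' ω, A.indicator (fun ω => E₁ * p' ω) ω
          ≤ ∑' ω, E₁ * p' ω := ENNReal.tsum_le_tsum fun ω => Set.indicator_le_self _ _ _
        _ = E₁ * ∑' ω, p' ω := ENNReal.tsum_mul_left
        _ = E₁ := by rw [hp']; simp [(M₁ D').tsum_coe]
  have hsplit : ∑' ω, A.indicator (fun ω => p ω - E₁ * p' ω) ω
      + ∑' ω, A.indicator (fun ω => E₁ * p' ω) ω = ∑' ω, A.indicator p ω := by
    rw [← ENNReal.tsum_add]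
    refine tsum_congr fun ω => ?_
    by_cases hω : ω ∈ A
    · simp only [Set.indicator_of_mem hω]
      exact tsub_add_cancel_of_le (le_of_lt hω)
    · simp [Set.indicator_of_notMem hω]
  have hDPA : ∑' ω, A.indicator p ω
      ≤ ∑' ω, A.indicator (fun ω => E₁ * p' ω) ω + d₁ := by
    have := hM₁ D D' hDD' A
    rw [PMF.toOuterMeasure_apply, PMF.toOuterMeasure_apply] at this
    calc ∑' ω, A.indicator p ω
        ≤ E₁ * ∑' ω, A.indicator (fun ω => M₁ D' ω) ω + d₁ := this
      _ = ∑' ω, A.indicator (fun ω => E₁ * p' ω) ω + d₁ := by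
          rw [← ENNReal.tsum_mul_left]
          congr 1
          refine tsum_congr fun ω => ?_
          by_cases hω : ω ∈ A <;>
            simp [Set.indicator_of_mem, Set.indicator_of_notMem, hω, hp']
  have hexcess : ∑' ω, A.indicator (fun ω => p ω - E₁ * p' ω) ω ≤ d₁ := by
    have h' : ∑' ω, A.indicator (fun ω => p ω - E₁ * p' ω) ω
        + ∑' ω, A.indicator (fun ω => E₁ * p' ω) ω
        ≤ d₁ + ∑' ω, A.indicator (fun ω => E₁ * p' ω) ω := by
      rw [hsplit]
      calc ∑' ω, A.indicator p ω
          ≤ ∑' ω, A.indicator (fun ω => E₁ * p' ω) ω + d₁ := hDPA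
        _ = d₁ + ∑' ω, A.indicator (fun ω => E₁ * p' ω) ω := add_comm _ _
    exact (ENNReal.add_le_add_iff_right hBfin).mp h'
  -- pointwise bound for the p·h sum
  have hpoint : ∀ ω, p ω * h ω ≤ E₁ * p' ω * h ω
      + A.indicator (fun ω => p ω - E₁ * p' ω) ω := by
    intro ω
    by_cases hω : ω ∈ A
    · rw [Set.indicator_of_mem hω]
      have : p ω = E₁ * p' ω + (p ω - E₁ * p' ω) := (add_tsub_cancel_of_le hω.le).symm
      calc p ω * h ω = (E₁ * p' ω + (p ω - E₁ * p' ω)) * h ω := by rw [← this]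
        _ = E₁ * p' ω * h ω + (p ω - E₁ * p' ω) * h ω := add_mul _ _ _
        _ ≤ E₁ * p' ω * h ω + (p ω - E₁ * p' ω) * 1 :=
            add_le_add_right (mul_le_mul_right (hh_le_one ω) _) _
        _ = E₁ * p' ω * h ω + (p ω - E₁ * p' ω) := by rw [mul_one]
    · rw [Set.indicator_of_notMem hω, add_zero]
      exact mul_le_mul_left (not_lt.mp hω) _
  -- main chain
  rw [hLHS, hRHS]
  calc ∑' ω, p ω * g ω
      ≤ ∑' ω, p ω * (h ω + d₂) :=
        ENNReal.tsum_le_tsum fun ω => mul_le_mul_right (hg_le ω) _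
    _ = ∑' ω, (p ω * h ω + p ω * d₂) := tsum_congr fun ω => mul_add _ _ _
    _ = (∑' ω, p ω * h ω) + (∑' ω, p ω) * d₂ := by
        rw [ENNReal.tsum_add, ENNReal.tsum_mul_right]
    _ = (∑' ω, p ω * h ω) + d₂ := by rw [hp]; simp [(M₁ D).tsum_coe]
    _ ≤ (∑' ω, (E₁ * p' ω * h ω + A.indicator (fun ω => p ω - E₁ * p' ω) ω)) + d₂ :=
        add_le_add_left (ENNReal.tsum_le_tsum hpoint) _
    _ = E₁ * (∑' ω, p' ω * h ω) + (∑' ω, A.indicator (fun ω => p ω - E₁ * p' ω) ω) + d₂ := by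
        rw [ENNReal.tsum_add, ← ENNReal.tsum_mul_left]
        congr 2
        exact tsum_congr fun ω => by rw [mul_assoc]
    _ ≤ E₁ * (∑' ω, p' ω * (E₂ * q ω)) + d₁ + d₂ := by
        refine add_le_add_left (add_le_add ?_ hexcess) _
        refine mul_le_mul_right (ENNReal.tsum_le_tsum fun ω => ?_) _
        exact mul_le_mul_right (min_le_right _ _) _
    _ = E₁ * E₂ * (∑' ω, p' ω * q ω) + (d₁ + d₂) := by
        rw [add_assoc]
        congr 1
        rw [mul_assoc]
        congr 1
        rw [← ENNReal.tsum_mul_left]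
        exact tsum_congr fun ω => by ring
    _ = ENNReal.ofReal (Real.exp (ε₁ + ε₂)) * (∑' ω, p' ω * q ω)
          + ENNReal.ofReal (δ₁ + δ₂) := by
        rw [Real.exp_add, ENNReal.ofReal_mul (Real.exp_nonneg ε₁),
          ENNReal.ofReal_add hδ₁ hδ₂]
end

section
/- Privacy amplification by Poisson subsampling: let X be a type of records, let datasets be finite sets D : Finset X with the add/remove adjacency relation D ≃ D' iff D' = D ∪ {x} for some x ∉ D (or vice versa), and let M : Finset X → PMF Ω satisfy (ε,δ)-differential privacy with respect to this adjacency. For 0 < p < 1 let S_p : Finset X → PMF (Finset X) be the Poisson subsampling operator that includes each element of D in the output subset independently with probability p. Then the subsampled mechanism D ↦ (S_p D).bind M satisfies (ε',δ')-differential privacy with ε' = log(1 + p·(exp(ε) − 1)) and δ' = p·δ; in particular ε' ≤ ε and δ' ≤ δ. -/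
open scoped ENNReal

theorem sp_insert_key {X : Type*} [DecidableEq X] (p : ℝ)
    (Sp : Finset X → PMF (Finset X))
    (hSp : ∀ D T, Sp D T =
      if T ⊆ D then
        ENNReal.ofReal p ^ T.card * ENNReal.ofReal (1 - p) ^ (D.card - T.card)
      else 0)
    (D : Finset X) (x : X) (hx : x ∉ D) (f : Finset X → ℝ≥0∞) :
    ∑' T, Sp (insert x D) T * f T
      = ENNReal.ofReal (1 - p) * ∑' T, Sp D T * f T
        + ENNReal.ofReal p * ∑' T, Sp D T * f (insert x T) := by
  have hcard : (insert x D).card = D.card + 1 := Finset.card_insert_of_notMem hx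
  have h1 : ∀ T : Finset X, x ∉ T →
      Sp (insert x D) T = ENNReal.ofReal (1 - p) * Sp D T := by
    intro T hT
    rw [hSp, hSp]
    by_cases hTD : T ⊆ D
    · rw [if_pos hTD, if_pos (hTD.trans (Finset.subset_insert x D)), hcard]
      have : D.card + 1 - T.card = (D.card - T.card) + 1 :=
        Nat.succ_sub (Finset.card_le_card hTD)
      rw [this, pow_succ]
      ring
    · rw [if_neg hTD, if_neg, mul_zero]
      intro hc
      exact hTD fun y hy => by
        rcases Finset.mem_insert.mp (hc hy) with h | h
        · exact absurd (h ▸ hy) hT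
        · exact h
  have h2 : ∀ T : Finset X, x ∉ T →
      Sp (insert x D) (insert x T) = ENNReal.ofReal p * Sp D T := by
    intro T hT
    rw [hSp, hSp]
    have hcardT : (insert x T).card = T.card + 1 := Finset.card_insert_of_notMem hT
    by_cases hTD : T ⊆ D
    · rw [if_pos hTD, if_pos (Finset.insert_subset_insert x hTD), hcard, hcardT]
      have : D.card + 1 - (T.card + 1) = D.card - T.card := by omega
      rw [this, pow_succ]
      ring
    · rw [if_neg hTD, if_neg, mul_zero]
      intro hc
      exact hTD fun y hy => by
        rcases Finset.mem_insert.mp (hc (Finset.mem_insert_of_mem hy)) with h | h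
        · exact absurd (h ▸ hy) hT
        · exact h
  have hzero : ∀ T : Finset X, x ∈ T → Sp D T = 0 := by
    intro T hT
    rw [hSp, if_neg]
    intro hc
    exact hx (hc hT)
  set g : Finset X → ℝ≥0∞ := fun T => Sp (insert x D) T * f T with hg
  have hsplit : ∑' T, g T = ∑' T : {T : Finset X // x ∈ T}, g T
      + ∑' T : {T : Finset X // x ∉ T}, g T :=
    (Summable.tsum_add_tsum_compl (s := {T | x ∈ T}) ENNReal.summable ENNReal.summable).symm
  have hre : ∑' T : {T : Finset X // x ∈ T}, g T
      = ∑' T : {T : Finset X // x ∉ T}, g (insert x T) := by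
    refine Equiv.tsum_eq (⟨fun T => ⟨insert x T, Finset.mem_insert_self x T⟩,
      fun T => ⟨T.1.erase x, Finset.notMem_erase x T.1⟩, ?_, ?_⟩ :
        {T : Finset X // x ∉ T} ≃ {T : Finset X // x ∈ T}) (fun T => g T) |>.symm
    · rintro ⟨T, hT⟩
      simp [Finset.erase_insert hT]
    · rintro ⟨T, hT⟩
      simp [Finset.insert_erase hT]
  have e1 : ∑' T : {T : Finset X // x ∉ T}, g (insert x T)
      = ENNReal.ofReal p * ∑' T, Sp D T * f (insert x T) := by
    have : ∀ T : {T : Finset X // x ∉ T}, g (insert x T)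
        = ENNReal.ofReal p * (Sp D T.1 * f (insert x T.1)) := by
      rintro ⟨T, hT⟩
      simp only [hg, h2 T hT, mul_assoc]
    rw [tsum_congr this, ENNReal.tsum_mul_left]
    congr 1
    refine tsum_subtype_eq_of_support_subset (s := {T : Finset X | x ∉ T})
      (f := fun T => Sp D T * f (insert x T)) ?_
    intro T hT
    simp only [Set.mem_setOf_eq]
    intro hc
    exact hT (by simp [Function.mem_support, hzero T hc])
  have e2 : ∑' T : {T : Finset X // x ∉ T}, g T
      = ENNReal.ofReal (1 - p) * ∑' T, Sp D T * f T := by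
    have : ∀ T : {T : Finset X // x ∉ T}, g T
        = ENNReal.ofReal (1 - p) * (Sp D T.1 * f T.1) := by
      rintro ⟨T, hT⟩
      simp only [hg, h1 T hT, mul_assoc]
    rw [tsum_congr this, ENNReal.tsum_mul_left]
    congr 1
    refine tsum_subtype_eq_of_support_subset (s := {T : Finset X | x ∉ T})
      (f := fun T => Sp D T * f T) ?_
    intro T hT
    simp only [Set.mem_setOf_eq]
    intro hc
    exact hT (by simp [Function.mem_support, hzero T hc])
  rw [hsplit, hre, e1, e2, add_comm]


/-- Privacy amplification by Poisson subsampling: if `M` is `(ε,δ)`-DP with respect to the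
add/remove adjacency relation on finite datasets (`D ≃ D'` iff one is obtained from the other
by inserting a single new record), and `Sp` is the Poisson subsampling operator with rate
`0 < p < 1` (including each element of the dataset independently with probability `p`,
i.e. `Sp D` gives mass `p^|T| * (1-p)^(|D|-|T|)` to each `T ⊆ D`), then the subsampled
mechanism `D ↦ (Sp D).bind M` is `(ε',δ')`-DP with `ε' = log (1 + p * (exp ε - 1))` and
`δ' = p * δ`; in particular `ε' ≤ ε` and `δ' ≤ δ`. -/
theorem dp_poisson_subsampling {X Ω : Type*} [DecidableEq X]
    (ε δ : ℝ) (hε : 0 ≤ ε) (hδ : 0 ≤ δ) (p : ℝ) (hp0 : 0 < p) (hp1 : p < 1)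
    (adj : Finset X → Finset X → Prop)
    (hadj : ∀ D D', adj D D' ↔
      ((∃ x ∉ D, D' = insert x D) ∨ (∃ x ∉ D', D = insert x D')))
    (M : Finset X → PMF Ω)
    (hM : ∀ D D', adj D D' → ∀ S : Set Ω,
      (M D).toOuterMeasure S ≤
        ENNReal.ofReal (Real.exp ε) * (M D').toOuterMeasure S + ENNReal.ofReal δ)
    (Sp : Finset X → PMF (Finset X))
    (hSp : ∀ D T, Sp D T =
      if T ⊆ D then
        ENNReal.ofReal p ^ T.card * ENNReal.ofReal (1 - p) ^ (D.card - T.card)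
      else 0) :
    (∀ D D', adj D D' → ∀ S : Set Ω,
      ((Sp D).bind M).toOuterMeasure S ≤
        ENNReal.ofReal (Real.exp (Real.log (1 + p * (Real.exp ε - 1)))) *
            ((Sp D').bind M).toOuterMeasure S
          + ENNReal.ofReal (p * δ)) ∧
      Real.log (1 + p * (Real.exp ε - 1)) ≤ ε ∧ p * δ ≤ δ := by
  set u : ℝ := Real.exp ε with hu_def
  have hu : 1 ≤ u := Real.one_le_exp hε
  have hlam : (0:ℝ) < 1 + p * (u - 1) := by nlinarith
  have hexplog : Real.exp (Real.log (1 + p * (u - 1))) = 1 + p * (u - 1) :=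
    Real.exp_log hlam
  refine ⟨?_, ?_, by nlinarith⟩
  swap
  · rw [Real.log_le_iff_le_exp hlam]
    nlinarith
  intro D D' hDD S
  -- general facts
  have hfle1 : ∀ T : Finset X, (M T).toOuterMeasure S ≤ 1 := fun T => by
    rw [PMF.toOuterMeasure_apply]
    calc ∑' b, S.indicator (M T) b ≤ ∑' b, M T b :=
          ENNReal.tsum_le_tsum fun b => Set.indicator_le_self _ _ b
      _ = 1 := (M T).tsum_coe
  set f : Finset X → ℝ≥0∞ := fun T => (M T).toOuterMeasure S with hf
  -- the core one-sided estimate, parameterized by the smaller set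
  have core : ∀ (D0 : Finset X) (x : X), x ∉ D0 →
      ((Sp D0).bind M).toOuterMeasure S ≤
        ENNReal.ofReal (1 + p * (u - 1)) * ((Sp (insert x D0)).bind M).toOuterMeasure S
          + ENNReal.ofReal (p * δ) ∧
      ((Sp (insert x D0)).bind M).toOuterMeasure S ≤
        ENNReal.ofReal (1 + p * (u - 1)) * ((Sp D0).bind M).toOuterMeasure S
          + ENNReal.ofReal (p * δ) := by
    intro D0 x hx
    have hzero : ∀ T : Finset X, x ∈ T → Sp D0 T = 0 := by
      intro T hT
      rw [hSp, if_neg]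
      intro hc; exact hx (hc hT)
    set A : ℝ≥0∞ := ∑' T, Sp D0 T * f T with hA
    set B : ℝ≥0∞ := ∑' T, Sp D0 T * f (insert x T) with hB
    have hbind0 : ((Sp D0).bind M).toOuterMeasure S = A :=
      PMF.toOuterMeasure_bind_apply _ _ _
    have hbind1 : ((Sp (insert x D0)).bind M).toOuterMeasure S
        = ENNReal.ofReal (1 - p) * A + ENNReal.ofReal p * B := by
      rw [PMF.toOuterMeasure_bind_apply]
      exact sp_insert_key p Sp hSp D0 x hx f
    have hA1 : A ≤ 1 := by
      rw [hA]
      calc ∑' T, Sp D0 T * f T ≤ ∑' T, Sp D0 T :=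
            ENNReal.tsum_le_tsum fun T => by
              simpa using mul_le_mul_right (hfle1 T) (Sp D0 T)
        _ = 1 := (Sp D0).tsum_coe
    have hB1 : B ≤ 1 := by
      rw [hB]
      calc ∑' T, Sp D0 T * f (insert x T) ≤ ∑' T, Sp D0 T :=
            ENNReal.tsum_le_tsum fun T => by
              simpa using mul_le_mul_right (hfle1 (insert x T)) (Sp D0 T)
        _ = 1 := (Sp D0).tsum_coe
    have hAtop : A ≠ ⊤ := (hA1.trans_lt (by norm_num)).ne
    have hBtop : B ≠ ⊤ := (hB1.trans_lt (by norm_num)).ne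
    have hsum_bound : ∀ g h : Finset X → ℝ≥0∞,
        (∀ T, x ∉ T → g T ≤ ENNReal.ofReal u * h T + ENNReal.ofReal δ) →
        ∑' T, Sp D0 T * g T ≤
          ENNReal.ofReal u * ∑' T, Sp D0 T * h T + ENNReal.ofReal δ := by
      intro g h hgh
      calc ∑' T, Sp D0 T * g T
          ≤ ∑' T, Sp D0 T * (ENNReal.ofReal u * h T + ENNReal.ofReal δ) := by
            refine ENNReal.tsum_le_tsum fun T => ?_
            by_cases hxT : x ∈ T
            · simp [hzero T hxT]
            · exact mul_le_mul_right (hgh T hxT) _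
        _ = ENNReal.ofReal u * ∑' T, Sp D0 T * h T + ENNReal.ofReal δ := by
            simp only [mul_add, mul_left_comm (Sp D0 _) (ENNReal.ofReal u)]
            rw [ENNReal.tsum_add, ENNReal.tsum_mul_left, ENNReal.tsum_mul_right,
              (Sp D0).tsum_coe, one_mul]
    have hAB : A ≤ ENNReal.ofReal u * B + ENNReal.ofReal δ := by
      refine hsum_bound _ _ fun T hxT => ?_
      exact hM T (insert x T) ((hadj _ _).mpr (Or.inl ⟨x, hxT, rfl⟩)) S
    have hBA : B ≤ ENNReal.ofReal u * A + ENNReal.ofReal δ := by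
      refine hsum_bound _ _ fun T hxT => ?_
      exact hM (insert x T) T ((hadj _ _).mpr (Or.inr ⟨x, hxT, rfl⟩)) S
    -- pass to reals
    set a : ℝ := A.toReal with ha_def
    set b : ℝ := B.toReal with hb_def
    have ha0 : 0 ≤ a := ENNReal.toReal_nonneg
    have hb0 : 0 ≤ b := ENNReal.toReal_nonneg
    have hAa : A = ENNReal.ofReal a := (ENNReal.ofReal_toReal hAtop).symm
    have hBb : B = ENNReal.ofReal b := (ENNReal.ofReal_toReal hBtop).symm
    have hmulne : ENNReal.ofReal u * B + ENNReal.ofReal δ ≠ ⊤ := by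
      refine ENNReal.add_ne_top.mpr ⟨ENNReal.mul_ne_top ENNReal.ofReal_ne_top hBtop,
        ENNReal.ofReal_ne_top⟩
    have hmulne' : ENNReal.ofReal u * A + ENNReal.ofReal δ ≠ ⊤ := by
      refine ENNReal.add_ne_top.mpr ⟨ENNReal.mul_ne_top ENNReal.ofReal_ne_top hAtop,
        ENNReal.ofReal_ne_top⟩
    have hu0 : (0:ℝ) < u := lt_of_lt_of_le one_pos hu
    have hab : a ≤ u * b + δ := by
      have h := ENNReal.toReal_mono hmulne hAB
      rwa [ENNReal.toReal_add (ENNReal.mul_ne_top ENNReal.ofReal_ne_top hBtop)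
        ENNReal.ofReal_ne_top, ENNReal.toReal_mul, ENNReal.toReal_ofReal hu0.le,
        ENNReal.toReal_ofReal hδ] at h
    have hba : b ≤ u * a + δ := by
      have h := ENNReal.toReal_mono hmulne' hBA
      rwa [ENNReal.toReal_add (ENNReal.mul_ne_top ENNReal.ofReal_ne_top hAtop)
        ENNReal.ofReal_ne_top, ENNReal.toReal_mul, ENNReal.toReal_ofReal hu0.le,
        ENNReal.toReal_ofReal hδ] at h
    have hq : (0:ℝ) ≤ 1 - p := by linarith
    constructor
    · -- small ≤ λ * large + pδ
      rw [hbind0, hbind1, hAa, hBb]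
      have key : a ≤ (1 + p * (u - 1)) * ((1 - p) * a + p * b) + p * δ := by
        have h1 : u * a ≤ u * ((1 + p * (u - 1)) * ((1 - p) * a + p * b) + p * δ) := by
          have hint1 := mul_le_mul_of_nonneg_left hab
            (mul_nonneg hlam.le hp0.le)
          nlinarith [mul_nonneg (mul_nonneg (mul_nonneg hp0.le hq) (sq_nonneg (u - 1))) ha0,
            mul_nonneg (mul_nonneg (mul_nonneg hp0.le hq) (by linarith : (0:ℝ) ≤ u - 1)) hδ]
        exact le_of_mul_le_mul_left h1 hu0
      calc ENNReal.ofReal a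
          ≤ ENNReal.ofReal ((1 + p * (u - 1)) * ((1 - p) * a + p * b) + p * δ) :=
            ENNReal.ofReal_le_ofReal key
        _ = ENNReal.ofReal (1 + p * (u - 1)) *
              (ENNReal.ofReal (1 - p) * ENNReal.ofReal a
                + ENNReal.ofReal p * ENNReal.ofReal b) + ENNReal.ofReal (p * δ) := by
            rw [ENNReal.ofReal_add
                (mul_nonneg hlam.le (add_nonneg (mul_nonneg hq ha0) (mul_nonneg hp0.le hb0)))
                (mul_nonneg hp0.le hδ),
              ENNReal.ofReal_mul hlam.le,
              ENNReal.ofReal_add (mul_nonneg hq ha0) (mul_nonneg hp0.le hb0),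
              ENNReal.ofReal_mul hq, ENNReal.ofReal_mul hp0.le]
    · -- large ≤ λ * small + pδ
      rw [hbind0, hbind1, hAa, hBb]
      have key : (1 - p) * a + p * b ≤ (1 + p * (u - 1)) * a + p * δ := by
        nlinarith [mul_le_mul_of_nonneg_left hba hp0.le]
      calc ENNReal.ofReal (1 - p) * ENNReal.ofReal a + ENNReal.ofReal p * ENNReal.ofReal b
          = ENNReal.ofReal ((1 - p) * a + p * b) := by
            rw [ENNReal.ofReal_add (mul_nonneg hq ha0) (mul_nonneg hp0.le hb0),
              ENNReal.ofReal_mul hq, ENNReal.ofReal_mul hp0.le]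
        _ ≤ ENNReal.ofReal ((1 + p * (u - 1)) * a + p * δ) :=
            ENNReal.ofReal_le_ofReal key
        _ = ENNReal.ofReal (1 + p * (u - 1)) * ENNReal.ofReal a + ENNReal.ofReal (p * δ) := by
            rw [ENNReal.ofReal_add (mul_nonneg hlam.le ha0) (mul_nonneg hp0.le hδ),
              ENNReal.ofReal_mul hlam.le]
  rw [hexplog]
  rcases (hadj D D').mp hDD with ⟨x, hx, rfl⟩ | ⟨x, hx, rfl⟩
  · exact (core D x hx).1
  · exact (core D' x hx).2
end

section
/- Laplace mechanism: let f : 𝒟 → ℝ be a query on a type 𝒟 with a symmetric adjacency relation ≃, with global ℓ¹-sensitivity Δ₁ meaning |f(D) − f(D')| ≤ Δ₁ for all adjacent D ≃ D'. Let ε > 0 and β ≥ Δ₁/ε. Then the mechanism M(D) = f(D) + ξ, where ξ is a real random variable with the Laplace distribution of scale β (the probability measure on ℝ with density x ↦ (1/(2β)) · exp(−|x|/β) with respect to Lebesgue measure), satisfies (ε,0)-differential privacy: for all adjacent D ≃ D' and all measurable sets S ⊆ ℝ, Pr[M(D) ∈ S] ≤ exp(ε) · Pr[M(D') ∈ S].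 -/
open MeasureTheory

/-- The Laplace distribution with scale `β`: the measure on `ℝ` with Lebesgue density
`x ↦ (2β)⁻¹ * exp (-|x| / β)`. -/
noncomputable def laplaceMeasure (β : ℝ) : Measure ℝ :=
  volume.withDensity (fun x => ENNReal.ofReal ((2 * β)⁻¹ * Real.exp (-|x| / β)))

lemma laplace_map_apply (β c : ℝ) {S : Set ℝ} (hS : MeasurableSet S) :
    Measure.map (fun x => c + x) (laplaceMeasure β) S =
      ∫⁻ y in S, ENNReal.ofReal ((2 * β)⁻¹ * Real.exp (-|y - c| / β)) := by
  have hmeas : Measurable fun x : ℝ => ENNReal.ofReal ((2 * β)⁻¹ * Real.exp (-|x| / β)) := by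
    apply ENNReal.measurable_ofReal.comp
    exact (measurable_const.mul ((measurable_abs.neg.div_const β).exp))
  rw [laplaceMeasure, Measure.map_apply (measurable_const_add c) hS,
    withDensity_apply _ ((measurable_const_add c) hS)]
  have hmp : MeasurePreserving (fun x : ℝ => c + x) volume volume :=
    measurePreserving_add_left volume c
  have := hmp.setLIntegral_comp_preimage (s := S) hS
    (f := fun y => ENNReal.ofReal ((2 * β)⁻¹ * Real.exp (-|y - c| / β)))
    (by
      apply ENNReal.measurable_ofReal.comp
      exact measurable_const.mul ((((measurable_id.sub_const c).abs).neg.div_const β).exp))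
  simp only [add_sub_cancel_left] at this
  exact this

/-- The Laplace mechanism: if `f : 𝒟 → ℝ` has global ℓ¹-sensitivity `Δ₁` (i.e.
`|f D - f D'| ≤ Δ₁` for all adjacent `D ≃ D'`), `ε > 0` and `β ≥ Δ₁ / ε`, then the mechanism
`M D = f D + ξ` with `ξ` Laplace-distributed with scale `β` satisfies `(ε,0)`-differential
privacy: for all adjacent `D ≃ D'` and all measurable `S ⊆ ℝ`,
`Pr[M D ∈ S] ≤ exp ε * Pr[M D' ∈ S]`. -/
theorem laplace_mechanism_dp {𝒟 : Type*} (adj : 𝒟 → 𝒟 → Prop) (hadj : Symmetric adj)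
    (f : 𝒟 → ℝ) (Δ₁ ε β : ℝ) (hε : 0 < ε) (hβpos : 0 < β) (hβ : Δ₁ / ε ≤ β)
    (hsens : ∀ D D', adj D D' → |f D - f D'| ≤ Δ₁) :
    ∀ D D', adj D D' → ∀ S : Set ℝ, MeasurableSet S →
      Measure.map (fun x => f D + x) (laplaceMeasure β) S ≤
        ENNReal.ofReal (Real.exp ε) * Measure.map (fun x => f D' + x) (laplaceMeasure β) S := by
  intro D D' hDD' S hS
  rw [laplace_map_apply β (f D) hS, laplace_map_apply β (f D') hS,
    ← lintegral_const_mul _ (by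
      apply ENNReal.measurable_ofReal.comp
      exact measurable_const.mul
        ((((measurable_id.sub_const (f D')).abs).neg.div_const β).exp))]
  apply lintegral_mono
  intro y
  beta_reduce
  rw [← ENNReal.ofReal_mul (Real.exp_nonneg ε)]
  apply ENNReal.ofReal_le_ofReal
  rw [mul_comm (Real.exp ε), mul_assoc]
  apply mul_le_mul_of_nonneg_left _ (by positivity)
  rw [← Real.exp_add, Real.exp_le_exp]
  have h1 : |y - f D'| ≤ |y - f D| + Δ₁ := by
    have := hsens D D' hDD'
    calc |y - f D'| = |(y - f D) + (f D - f D')| := by ring_nf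
      _ ≤ |y - f D| + |f D - f D'| := abs_add_le _ _
      _ ≤ |y - f D| + Δ₁ := by linarith
  have hΔ : Δ₁ ≤ ε * β := by
    rw [div_le_iff₀ hε] at hβ; linarith
  calc -|y - f D| / β ≤ (-|y - f D'| + ε * β) / β := by gcongr; linarith
    _ = -|y - f D'| / β + ε := by field_simp
end

section
/- Rényi divergence between equal-variance real Gaussians: for α > 1, σ > 0 and μ₁, μ₂ ∈ ℝ, the Rényi divergence of order α between the Gaussian measures N(μ₁, σ²) and N(μ₂, σ²) on ℝ equals α·(μ₁ − μ₂)²/(2σ²). -/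
open MeasureTheory ProbabilityTheory
open scoped ENNReal NNReal Real

attribute [local instance] Classical.propDecidable

/-- The Rényi divergence of order `α` between measures `P` and `Q`:
`D_α(P‖Q) = (α-1)⁻¹ * log ∫ (dP/dQ)^α dQ` if `P ≪ Q`, and `⊤` otherwise. -/
noncomputable def renyiDiv {Ω : Type*} [MeasurableSpace Ω] (α : ℝ) (P Q : Measure Ω) : EReal :=
  if P ≪ Q then
    (((α - 1)⁻¹ * Real.log (∫ x, ((P.rnDeriv Q x).toReal) ^ α ∂Q) : ℝ) : EReal)
  else ⊤

lemma renyi_pointwise (α : ℝ) {σ : ℝ} (hσ : 0 < σ) (μ₁ μ₂ : ℝ) (x : ℝ) :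
    gaussianPDFReal μ₂ ⟨σ ^ 2, sq_nonneg σ⟩ x *
      (gaussianPDFReal μ₁ ⟨σ ^ 2, sq_nonneg σ⟩ x /
        gaussianPDFReal μ₂ ⟨σ ^ 2, sq_nonneg σ⟩ x) ^ α
    = Real.exp (α * (α - 1) * (μ₁ - μ₂) ^ 2 / (2 * σ ^ 2)) *
        gaussianPDFReal (μ₂ + α * (μ₁ - μ₂)) ⟨σ ^ 2, sq_nonneg σ⟩ x := by
  have hσ2 : (0:ℝ) < σ ^ 2 := by positivity
  simp only [gaussianPDFReal]
  erw [NNReal.coe_mk]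
  have hc : (0:ℝ) < (Real.sqrt (2 * Real.pi * σ ^ 2))⁻¹ := by positivity
  rw [mul_div_mul_left _ _ (ne_of_gt hc), ← Real.exp_sub, ← Real.exp_mul,
    mul_assoc ((Real.sqrt (2 * Real.pi * σ ^ 2))⁻¹), ← Real.exp_add,
    mul_left_comm (Real.exp (α * (α - 1) * (μ₁ - μ₂) ^ 2 / (2 * σ ^ 2))), ← Real.exp_add]
  congr 1
  field_simp
  ring

/-- Rényi divergence between equal-variance real Gaussians: for `α > 1`, `σ > 0` and
`μ₁ μ₂ : ℝ`, `D_α(N(μ₁,σ²) ‖ N(μ₂,σ²)) = α * (μ₁ - μ₂)² / (2σ²)`. -/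
theorem renyiDiv_gaussianReal (α : ℝ) (hα : 1 < α) (σ : ℝ) (hσ : 0 < σ) (μ₁ μ₂ : ℝ) :
    renyiDiv α (gaussianReal μ₁ ⟨σ ^ 2, sq_nonneg σ⟩) (gaussianReal μ₂ ⟨σ ^ 2, sq_nonneg σ⟩) =
      ((α * (μ₁ - μ₂) ^ 2 / (2 * σ ^ 2) : ℝ) : EReal) := by
  set v : ℝ≥0 := ⟨σ ^ 2, sq_nonneg σ⟩ with hv_def
  have hv : v ≠ 0 := by
    intro h
    have : (v : ℝ) = 0 := by rw [h]; simp
    rw [hv_def] at this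
    erw [NNReal.coe_mk] at this
    nlinarith
  set P := gaussianReal μ₁ v with hP_def
  set Q := gaussianReal μ₂ v with hQ_def
  have hPQ : P ≪ Q :=
    (gaussianReal_absolutelyContinuous μ₁ hv).trans (gaussianReal_absolutelyContinuous' μ₂ hv)
  set g : ℝ → ℝ≥0∞ := fun x => gaussianPDF μ₁ v x / gaussianPDF μ₂ v x with hg_def
  have hg_meas : Measurable g := (measurable_gaussianPDF μ₁ v).div (measurable_gaussianPDF μ₂ v)
  have hP_eq : P = Q.withDensity g := by
    rw [hP_def, hQ_def, gaussianReal_of_var_ne_zero _ hv, gaussianReal_of_var_ne_zero _ hv,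
      ← withDensity_mul _ (measurable_gaussianPDF μ₂ v) hg_meas]
    congr 1
    funext x
    rw [hg_def]
    exact (ENNReal.mul_div_cancel (ne_of_gt (gaussianPDF_pos _ hv _)) ENNReal.ofReal_ne_top).symm
  have h_rn : P.rnDeriv Q =ᵐ[Q] g := by
    rw [hP_eq]; exact Q.rnDeriv_withDensity hg_meas
  have h_int1 : ∫ x, (P.rnDeriv Q x).toReal ^ α ∂Q = ∫ x, (g x).toReal ^ α ∂Q := by
    refine integral_congr_ae ?_
    filter_upwards [h_rn] with x hx
    rw [hx]
  have hpos : ∀ μ x, 0 < gaussianPDFReal μ v x := fun μ x => gaussianPDFReal_pos μ v x hv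
  have hg_toReal : ∀ x, (g x).toReal = gaussianPDFReal μ₁ v x / gaussianPDFReal μ₂ v x := by
    intro x
    rw [hg_def]
    simp only [gaussianPDF]
    rw [ENNReal.toReal_div, ENNReal.toReal_ofReal (hpos μ₁ x).le,
      ENNReal.toReal_ofReal (hpos μ₂ x).le]
  have hQ_wd : Q = volume.withDensity (fun x => ((gaussianPDFReal μ₂ v x).toNNReal : ℝ≥0∞)) := by
    rw [hQ_def, gaussianReal_of_var_ne_zero _ hv]
    rfl
  have h_int2 : ∫ x, (g x).toReal ^ α ∂Q
      = ∫ x, gaussianPDFReal μ₂ v x * ((gaussianPDFReal μ₁ v x / gaussianPDFReal μ₂ v x) ^ α) := by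
    rw [hQ_wd, integral_withDensity_eq_integral_smul
      ((measurable_gaussianPDFReal μ₂ v).real_toNNReal) _]
    refine integral_congr_ae (ae_of_all _ fun x => ?_)
    simp only [hg_toReal, NNReal.smul_def, smul_eq_mul, Real.coe_toNNReal _ (hpos μ₂ x).le]
  have h_int3 : ∫ x, gaussianPDFReal μ₂ v x *
        ((gaussianPDFReal μ₁ v x / gaussianPDFReal μ₂ v x) ^ α)
      = Real.exp (α * (α - 1) * (μ₁ - μ₂) ^ 2 / (2 * σ ^ 2)) := by
    have : ∀ x, gaussianPDFReal μ₂ v x *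
        ((gaussianPDFReal μ₁ v x / gaussianPDFReal μ₂ v x) ^ α)
        = Real.exp (α * (α - 1) * (μ₁ - μ₂) ^ 2 / (2 * σ ^ 2)) *
          gaussianPDFReal (μ₂ + α * (μ₁ - μ₂)) v x := fun x => renyi_pointwise α hσ μ₁ μ₂ x
    simp_rw [this]
    rw [integral_const_mul, integral_gaussianPDFReal_eq_one _ hv, mul_one]
  rw [renyiDiv, if_pos hPQ]
  norm_cast
  rw [h_int1, h_int2, h_int3, Real.log_exp]
  have h1 : α - 1 ≠ 0 := by linarith
  have h2 : σ ^ 2 ≠ 0 := by positivity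
  field_simp
end

section
/- Gaussian mechanism satisfies Rényi differential privacy: let f : 𝒟 → ℝ be a query on a type 𝒟 with a symmetric adjacency relation ≃, with global sensitivity Δ > 0, i.e. |f(D) − f(D')| ≤ Δ for all adjacent D ≃ D'. Let σ > 0 and define the mechanism M(D) to be the Gaussian measure N(f(D), Δ²σ²) on ℝ (i.e. M(D) = f(D) + ξ with ξ ~ N(0, Δ²σ²)). Then for every α > 1, M satisfies (α, α/(2σ²))-Rényi differential privacy: D_α(M(D)‖M(D')) ≤ α/(2σ²) for all adjacent D ≃ D'. -/
open MeasureTheory ProbabilityTheory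
open scoped NNReal ENNReal

attribute [local instance] Classical.propDecidable

open Real in
lemma renyiDiv_gaussian (μ₁ μ₂ : ℝ) (v : ℝ≥0) (hv : v ≠ 0) (α : ℝ) (hα : 1 < α) :
    renyiDiv α (gaussianReal μ₁ v) (gaussianReal μ₂ v)
      = ((α * (μ₁ - μ₂) ^ 2 / (2 * (v : ℝ)) : ℝ) : EReal) := by
  have hvr : (0 : ℝ) < (v : ℝ) := by
    rcases lt_or_eq_of_le v.coe_nonneg with h | h
    · exact h
    · exact absurd (by exact_mod_cast h.symm) hv
  set P := gaussianReal μ₁ v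
  set Q := gaussianReal μ₂ v
  set h : ℝ → ℝ≥0∞ := fun x => gaussianPDF μ₁ v x / gaussianPDF μ₂ v x with hh
  have hmeas : Measurable h := (measurable_gaussianPDF μ₁ v).div (measurable_gaussianPDF μ₂ v)
  have hq_ne_top : ∀ x, gaussianPDF μ₂ v x ≠ ∞ := fun x => ENNReal.ofReal_ne_top
  have hq_ne_zero : ∀ x, gaussianPDF μ₂ v x ≠ 0 := fun x => (gaussianPDF_pos μ₂ hv x).ne'
  have hP : P = Q.withDensity h := by
    rw [show P = gaussianReal μ₁ v from rfl, show Q = gaussianReal μ₂ v from rfl,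
      gaussianReal_of_var_ne_zero _ hv, gaussianReal_of_var_ne_zero _ hv,
      ← withDensity_mul _ (measurable_gaussianPDF μ₂ v) hmeas]
    refine congrArg _ (funext fun x => ?_)
    simp only [Pi.mul_apply, hh]
    exact (ENNReal.mul_div_cancel (hq_ne_zero x) (hq_ne_top x)).symm
  have habs : P ≪ Q := hP ▸ withDensity_absolutelyContinuous Q h
  have hrn : P.rnDeriv Q =ᵐ[Q] h := by
    rw [hP]; exact Measure.rnDeriv_withDensity Q hmeas
  rw [renyiDiv, if_pos habs]
  have hint_congr : ∫ x, ((P.rnDeriv Q x).toReal) ^ α ∂Q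
      = ∫ x, ((h x).toReal) ^ α ∂Q := by
    refine integral_congr_ae ?_
    filter_upwards [hrn] with x hx
    rw [hx]
  rw [hint_congr]
  have hQ : Q = volume.withDensity (fun x => ((gaussianPDFReal μ₂ v x).toNNReal : ℝ≥0∞)) := by
    rw [show Q = gaussianReal μ₂ v from rfl, gaussianReal_of_var_ne_zero _ hv]
    rfl
  have hint2 : ∫ x, ((h x).toReal) ^ α ∂Q
      = ∫ x, gaussianPDFReal μ₂ v x * ((h x).toReal) ^ α := by
    rw [hQ, integral_withDensity_eq_integral_smul
      ((measurable_gaussianPDFReal μ₂ v).real_toNNReal) (fun x => ((h x).toReal) ^ α)]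
    refine integral_congr_ae (ae_of_all _ fun x => ?_)
    simp only [NNReal.smul_def, smul_eq_mul,
      Real.coe_toNNReal _ (gaussianPDFReal_nonneg μ₂ v x)]
  rw [hint2]
  set m : ℝ := α * μ₁ + (1 - α) * μ₂ with hm
  set K : ℝ := α * (α - 1) * (μ₁ - μ₂) ^ 2 / (2 * (v : ℝ)) with hK
  have hpoint : ∀ x, gaussianPDFReal μ₂ v x * ((h x).toReal) ^ α
      = Real.exp K * gaussianPDFReal m v x := by
    intro x
    have hq_pos := gaussianPDFReal_pos μ₂ v x hv
    have hp_pos := gaussianPDFReal_pos μ₁ v x hv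
    have htoReal : (h x).toReal = gaussianPDFReal μ₁ v x / gaussianPDFReal μ₂ v x := by
      simp only [hh, gaussianPDF]
      rw [ENNReal.toReal_div, ENNReal.toReal_ofReal hp_pos.le, ENNReal.toReal_ofReal hq_pos.le]
    rw [htoReal]
    simp only [gaussianPDFReal]
    have hc : (0:ℝ) < (√(2 * π * (v:ℝ)))⁻¹ := by positivity
    rw [mul_div_mul_left _ _ hc.ne', ← Real.exp_sub, ← Real.exp_mul, mul_assoc, ← Real.exp_add]
    conv_rhs => rw [mul_left_comm, ← Real.exp_add]
    congr 1
    rw [Real.exp_eq_exp, hK, hm]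
    field_simp
    ring
  simp_rw [hpoint]
  rw [integral_const_mul, integral_gaussianPDFReal_eq_one m hv, mul_one, Real.log_exp]
  have hα1 : α - 1 ≠ 0 := sub_ne_zero.mpr hα.ne'
  norm_cast
  rw [hK]
  field_simp
  push_cast
  ring

/-- The Gaussian mechanism satisfies Rényi differential privacy: if `f : 𝒟 → ℝ` has global
sensitivity `Δ > 0` (i.e. `|f D - f D'| ≤ Δ` for adjacent `D ≃ D'`), `σ > 0`, and the
mechanism outputs `M D = N(f D, Δ²σ²)`, then for every `α > 1` and all adjacent `D ≃ D'`,
`D_α(M D ‖ M D') ≤ α / (2σ²)`, i.e. `M` is `(α, α/(2σ²))`-RDP. -/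
theorem gaussian_mechanism_rdp {𝒟 : Type*} (adj : 𝒟 → 𝒟 → Prop) (hadj : Symmetric adj)
    (f : 𝒟 → ℝ) (Δ σ : ℝ) (hΔ : 0 < Δ) (hσ : 0 < σ)
    (hsens : ∀ D D', adj D D' → |f D - f D'| ≤ Δ) :
    ∀ α : ℝ, 1 < α → ∀ D D', adj D D' →
      renyiDiv α (gaussianReal (f D) ⟨Δ ^ 2 * σ ^ 2, by positivity⟩)
          (gaussianReal (f D') ⟨Δ ^ 2 * σ ^ 2, by positivity⟩) ≤
        ((α / (2 * σ ^ 2) : ℝ) : EReal) := by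
  intro α hα D D' hDD'
  have hv : (⟨Δ ^ 2 * σ ^ 2, by positivity⟩ : ℝ≥0) ≠ 0 := by
    intro hcon
    have : Δ ^ 2 * σ ^ 2 = 0 := congrArg NNReal.toReal hcon
    nlinarith [mul_pos (pow_pos hΔ 2) (pow_pos hσ 2)]
  rw [renyiDiv_gaussian _ _ _ hv α hα]
  rw [EReal.coe_le_coe_iff]
  have habs := abs_le.mp (hsens D D' hDD')
  have hd2 : (f D - f D') ^ 2 ≤ Δ ^ 2 := sq_le_sq' habs.1 habs.2
  change α * (f D - f D') ^ 2 / (2 * (Δ ^ 2 * σ ^ 2)) ≤ α / (2 * σ ^ 2)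
  have h1 : α * (f D - f D') ^ 2 / (2 * (Δ ^ 2 * σ ^ 2))
      ≤ α * Δ ^ 2 / (2 * (Δ ^ 2 * σ ^ 2)) := by
    gcongr <;> first | positivity | linarith
  have h2 : α * Δ ^ 2 / (2 * (Δ ^ 2 * σ ^ 2)) = α / (2 * σ ^ 2) := by
    field_simp
  linarith
end
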